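/- arXiv:2312.15668 — 3 statements merged into one kernel-verified Lean document; each statement's English description precedes it below -/
import Mathlib

section
/- Let n be a positive integer, let P ∈ ℝ^{n×n} be a diagonal matrix with strictly positive diagonal entries, let Q ∈ ℝ^{n×n} be a symmetric positive definite matrix, and let c ∈ ℝ satisfy c > λ_max(P)/λ_min(Q). Then the 2n×2n symmetric block matrix R = [[cQ, P], [P, P]] is positive definite. -/
/-!
The eigenvalue bounds `λ_min(Q) • 1 ≤ Q` and `P ≤ λ_max(P) • 1` (Loewner order) give
`c • Q - P ≥ (c λ_min(Q) - λ_max(P)) • 1 > 0`. With `L = [[1, 0], [1, 1]]` we have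
`Lᴴ diag(c • Q - P, P) L = [[c • Q, P], [P, P]]`, and congruence by an invertible matrix
preserves positive definiteness.
-/

open Matrix
open scoped ComplexOrder

namespace Matrix

variable {𝕜 m n : Type*} [RCLike 𝕜] [Fintype m] [Fintype n]

theorem PosDef.fromBlocks_zero {A : Matrix m m 𝕜} {D : Matrix n n 𝕜} (hA : A.PosDef)
    (hD : D.PosDef) : (fromBlocks A 0 0 D).PosDef := by
  refine .of_dotProduct_mulVec_pos (hA.1.fromBlocks (by simp) hD.1) fun x hx => ?_
  obtain ⟨u, v, rfl⟩ : ∃ u v, x = Sum.elim u v := ⟨_, _, (Sum.elim_comp_inl_inr x).symm⟩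
  simp only [fromBlocks_mulVec, Function.star_sumElim, sumElim_dotProduct_sumElim,
    Sum.elim_comp_inl, Sum.elim_comp_inr, zero_mulVec, add_zero, zero_add]
  by_cases hu : u = 0
  · subst hu
    have hv : v ≠ 0 := by rintro rfl; exact hx Sum.elim_zero_zero
    simpa using hD.dotProduct_mulVec_pos hv
  · exact add_pos_of_pos_of_nonneg (hA.dotProduct_mulVec_pos hu)
      (hD.posSemidef.dotProduct_mulVec_nonneg v)

variable [DecidableEq n]

theorem PosDef.fromBlocks_of_posDef_sub {A D : Matrix n n 𝕜} (hD : D.PosDef)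
    (h : (A - D).PosDef) : (fromBlocks A D D D).PosDef := by
  have hL : IsUnit (fromBlocks 1 0 1 1 : Matrix (n ⊕ n) (n ⊕ n) 𝕜) :=
    (isUnit_iff_isUnit_det _).2 (by simp)
  convert (h.fromBlocks_zero hD).conjTranspose_mul_mul_same
    (mulVec_injective_of_isUnit hL) using 1
  simp [fromBlocks_conjTranspose, fromBlocks_multiply]

theorem IsHermitian.posSemidef_sub_smul_one_iff {A : Matrix n n 𝕜} (hA : A.IsHermitian)
    (r : ℝ) :
    (A - r • (1 : Matrix n n 𝕜)).PosSemidef ↔ ∀ i, r ≤ hA.eigenvalues i := by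
  have hr : (algebraMap ℝ (Matrix n n 𝕜) r).IsHermitian :=
    IsSelfAdjoint.algebraMap _ (.all r)
  rw [← Algebra.algebraMap_eq_smul_one, posSemidef_iff_isHermitian_and_spectrum_nonneg,
    and_iff_right (hA.sub hr), IsScalarTower.algebraMap_apply ℝ 𝕜,
    ← spectrum.sub_singleton_eq, hA.spectrum_eq_image_range]
  simp [Set.range_subset_iff]

theorem IsHermitian.posSemidef_smul_one_sub_iff {A : Matrix n n 𝕜} (hA : A.IsHermitian)
    (r : ℝ) :
    (r • (1 : Matrix n n 𝕜) - A).PosSemidef ↔ ∀ i, hA.eigenvalues i ≤ r := by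
  have hr : (algebraMap ℝ (Matrix n n 𝕜) r).IsHermitian :=
    IsSelfAdjoint.algebraMap _ (.all r)
  rw [← Algebra.algebraMap_eq_smul_one, posSemidef_iff_isHermitian_and_spectrum_nonneg,
    and_iff_right (hr.sub hA), IsScalarTower.algebraMap_apply ℝ 𝕜,
    ← spectrum.singleton_sub_eq, hA.spectrum_eq_image_range]
  simp [Set.range_subset_iff]

theorem IsHermitian.posDef_smul_sub_of_iSup_lt {A B : Matrix n n 𝕜} (hA : A.IsHermitian)
    (hB : B.IsHermitian) {c : ℝ} (hc : 0 ≤ c)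
    (h : ⨆ i, hB.eigenvalues i < c * ⨅ i, hA.eigenvalues i) : (c • A - B).PosDef := by
  set a := ⨅ i, hA.eigenvalues i
  set b := ⨆ i, hB.eigenvalues i
  have hAa : (A - a • 1).PosSemidef :=
    (hA.posSemidef_sub_smul_one_iff a).2 fun i => ciInf_le (Finite.bddBelow_range _) i
  have hBb : (b • 1 - B).PosSemidef :=
    (hB.posSemidef_smul_one_sub_iff b).2 fun i => le_ciSup (Finite.bddAbove_range _) i
  have hsplit : c • A - B =
      (c * a - b) • (1 : Matrix n n 𝕜) + (c • (A - a • 1) + (b • 1 - B)) := by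
    module
  rw [hsplit]
  exact (PosDef.one.smul (sub_pos.2 h)).add_posSemidef ((hAa.smul hc).add hBb)

end Matrix

/-- Appendix A of the paper: the Lyapunov block matrix `R = [[cQ, P], [P, P]]`
is positive definite when `c > λ_max(P) / λ_min(Q)`. -/
theorem block_lyapunov_posdef
    (n : ℕ) (hn : 0 < n)
    (p : Fin n → ℝ) (hp : ∀ i, 0 < p i)
    (P : Matrix (Fin n) (Fin n) ℝ) (hP : P = Matrix.diagonal p)
    (hPsym : P.IsHermitian)
    (Q : Matrix (Fin n) (Fin n) ℝ) (hQ : Q.PosDef)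
    (c : ℝ)
    (hc : c > (⨆ i, hPsym.eigenvalues i) / (⨅ i, hQ.1.eigenvalues i)) :
    (Matrix.fromBlocks (c • Q) P P P).PosDef := by
  have : Nonempty (Fin n) := Fin.pos_iff_nonempty.mp hn
  have hPpd : P.PosDef := hP ▸ posDef_diagonal_iff.2 hp
  have hPmax : 0 ≤ ⨆ i, hPsym.eigenvalues i :=
    Real.iSup_nonneg fun i => (hPpd.eigenvalues_pos i).le
  have hQmin : 0 < ⨅ i, hQ.1.eigenvalues i := by
    obtain ⟨j, hj⟩ := exists_eq_ciInf_of_finite (f := hQ.1.eigenvalues)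
    exact hj ▸ hQ.eigenvalues_pos j
  have hc0 : 0 ≤ c := (div_nonneg hPmax hQmin.le).trans hc.le
  exact hPpd.fromBlocks_of_posDef_sub
    (hQ.1.posDef_smul_sub_of_iSup_lt hPsym hc0 ((div_lt_iff₀ hQmin).1 hc))
end

section
/- Let ν, θ, ν', θ' > 0 be real numbers, and let S and I be independent real random variables such that S has probability density function f_S(x) = x^{(ν−2)/2} / (2 θ^ν Γ(ν)) · exp(−√x/θ) for x > 0 (and 0 otherwise) and I has probability density function f_I(x) = x^{ν'−1} / (θ'^{ν'} Γ(ν')) · exp(−x/θ') for x > 0 (and 0 otherwise). Then the ratio Z := S/I has probability density function f_Z(z) = z^{(ν−2)/2} / (2 θ^ν θ'^{ν'} Γ(ν) Γ(ν')) · ∫_0^∞ x^{(ν + 2ν' − 2)/2} exp(−√(xz)/θ − x/θ') dx for z > 0, where Γ denotes the Gamma function. -/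
open MeasureTheory Real Set
open scoped ENNReal

/-!
By independence the joint law of `(S, I)` is the product of the two laws, and on the
slice `I = x ≠ 0` the event `S / I ∈ A` has probability `|x| ∫_A f_S(x z) dz`
(substitute `s = x z`). Integrating this against the law of `I` and exchanging the integrals
(Tonelli) shows that `S / I` has density `z ↦ ∫ |x| f_I(x) f_S(x z) dx`. For the two given
densities the integrand vanishes unless `x > 0` and `z > 0`, and there the powers of `x`
combine into `x ^ ((ν + 2ν' - 2) / 2)`.
-/

theorem lintegral_eq_abs_mul_lintegral_comp_mul_left (G : ℝ → ℝ≥0∞) {a : ℝ} (ha : a ≠ 0) :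
    ∫⁻ s, G s = ENNReal.ofReal |a| * ∫⁻ z, G (a * z) := by
  conv_lhs => rw [← Real.smul_map_volume_mul_left ha]
  rw [lintegral_smul_measure, smul_eq_mul]
  exact congrArg _ (lintegral_map_equiv G (MeasurableEquiv.mulLeft₀ a ha))

theorem map_div_const_withDensity (f : ℝ → ℝ≥0∞) {x : ℝ} (hx : x ≠ 0) :
    (volume.withDensity f).map (· / x) =
      volume.withDensity fun z => ENNReal.ofReal |x| * f (x * z) := by
  ext A hA
  have h_comp : ∀ z, ((· / x) ⁻¹' A).indicator f (x * z) = A.indicator (fun z => f (x * z)) z :=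
    fun z => by
      classical
      rw [indicator_apply, indicator_apply, mem_preimage, mul_div_cancel_left₀ _ hx]
  rw [Measure.map_apply (measurable_div_const x) hA, withDensity_apply' _,
    withDensity_apply _ hA, ← lintegral_indicator (measurable_div_const x hA),
    lintegral_eq_abs_mul_lintegral_comp_mul_left _ hx, lintegral_const_mul' _ _ ENNReal.ofReal_ne_top]
  simp only [h_comp, lintegral_indicator hA]

theorem map_div_prod_withDensity {f g : ℝ → ℝ≥0∞} (hf : Measurable f) (hg : Measurable g) :
    ((volume.withDensity f).prod (volume.withDensity g)).map (fun p => p.1 / p.2) =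
      volume.withDensity fun z => ∫⁻ x, ENNReal.ofReal |x| * g x * f (x * z) := by
  have hdiv : Measurable fun p : ℝ × ℝ => p.1 / p.2 := measurable_fst.div measurable_snd
  ext A hA
  have h_slice : ∀ᵐ x, (volume.withDensity f) ((· / x) ⁻¹' A) =
      ∫⁻ z in A, ENNReal.ofReal |x| * f (x * z) := by
    filter_upwards [Measure.ae_ne volume 0] with x hx
    rw [← Measure.map_apply (measurable_div_const x) hA, map_div_const_withDensity f hx,
      withDensity_apply _ hA]
  have h_joint : Measurable fun p : ℝ × ℝ => ENNReal.ofReal |p.1| * g p.1 * f (p.1 * p.2) := by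
    fun_prop
  rw [Measure.map_apply hdiv hA, Measure.prod_apply_symm (hdiv hA),
    lintegral_withDensity_eq_lintegral_mul _ hg (measurable_measure_prodMk_right (hdiv hA)),
    withDensity_apply _ hA]
  calc ∫⁻ x, g x * (volume.withDensity f) ((· / x) ⁻¹' A)
      = ∫⁻ x, ∫⁻ z in A, ENNReal.ofReal |x| * g x * f (x * z) := by
        refine lintegral_congr_ae (h_slice.mono fun x hx => ?_)
        dsimp only
        rw [hx, ← lintegral_const_mul _ (by fun_prop)]
        simp only [mul_assoc, mul_left_comm (g x)]
    _ = ∫⁻ z in A, ∫⁻ x, ENNReal.ofReal |x| * g x * f (x * z) :=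
        lintegral_lintegral_swap h_joint.aemeasurable

theorem map_div_eq_withDensity_of_indepFun {Ω : Type*} [MeasurableSpace Ω] {μ : Measure Ω}
    [IsFiniteMeasure μ] {X Y : Ω → ℝ} {f g : ℝ → ℝ≥0∞} (hX : AEMeasurable X μ)
    (hY : AEMeasurable Y μ) (hf : Measurable f) (hg : Measurable g)
    (hXf : μ.map X = volume.withDensity f) (hYg : μ.map Y = volume.withDensity g)
    (hXY : ProbabilityTheory.IndepFun X Y μ) :
    μ.map (fun ω => X ω / Y ω) =
      volume.withDensity fun z => ∫⁻ x, ENNReal.ofReal |x| * g x * f (x * z) := by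
  have h_joint := (ProbabilityTheory.indepFun_iff_map_prod_eq_prod_map_map hX hY).mp hXY
  rw [hXf, hYg] at h_joint
  rw [← map_div_prod_withDensity hf hg, ← h_joint, AEMeasurable.map_map_of_aemeasurable
    (by fun_prop) (hX.prodMk hY)]
  rfl

noncomputable def signalPDF (ν θ x : ℝ) : ℝ :=
  if 0 < x then x ^ ((ν - 2) / 2) / (2 * θ ^ ν * Gamma ν) * exp (-√x / θ) else 0

noncomputable def interferencePDF (ν θ x : ℝ) : ℝ :=
  if 0 < x then x ^ (ν - 1) / (θ ^ ν * Gamma ν) * exp (-x / θ) else 0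

noncomputable def sirPDF (ν θ ν' θ' z : ℝ) : ℝ :=
  if 0 < z then
    z ^ ((ν - 2) / 2) / (2 * θ ^ ν * θ' ^ ν' * Gamma ν * Gamma ν') *
      ∫ x in Ioi (0 : ℝ), x ^ ((ν + 2 * ν' - 2) / 2) * exp (-√(x * z) / θ - x / θ')
  else 0

theorem measurable_signalPDF (ν θ : ℝ) : Measurable (signalPDF ν θ) :=
  Measurable.ite measurableSet_Ioi (by fun_prop) measurable_const

theorem measurable_interferencePDF (ν θ : ℝ) : Measurable (interferencePDF ν θ) :=
  Measurable.ite measurableSet_Ioi (by fun_prop) measurable_const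

theorem interferencePDF_nonneg {ν θ : ℝ} (hν : 0 ≤ ν) (hθ : 0 ≤ θ) (x : ℝ) :
    0 ≤ interferencePDF ν θ x := by
  unfold interferencePDF
  split_ifs with hx
  · have := Gamma_nonneg_of_nonneg hν
    positivity
  · rfl

theorem integrableOn_rpow_mul_exp_neg_sqrt_div_sub_div {p z θ θ' : ℝ} (hp : -1 < p)
    (hθ : 0 ≤ θ) (hθ' : 0 < θ') :
    IntegrableOn (fun x => x ^ p * exp (-√(x * z) / θ - x / θ')) (Ioi 0) := by
  refine (integrableOn_rpow_mul_exp_neg_mul_rpow hp zero_lt_one (inv_pos.2 hθ')).mono'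
    (by fun_prop) ((ae_restrict_iff' measurableSet_Ioi).2 (ae_of_all _ fun x (hx : 0 < x) => ?_))
  rw [norm_of_nonneg (by positivity), rpow_one]
  gcongr
  rw [neg_mul, ← div_eq_inv_mul, neg_div]
  have : 0 ≤ √(x * z) / θ := by positivity
  linarith

theorem mul_interferencePDF_mul_signalPDF {ν θ ν' θ' x z : ℝ} (hx : 0 < x) (hz : 0 < z) :
    x * interferencePDF ν' θ' x * signalPDF ν θ (x * z) =
      z ^ ((ν - 2) / 2) / (2 * θ ^ ν * θ' ^ ν' * Gamma ν * Gamma ν') *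
        (x ^ ((ν + 2 * ν' - 2) / 2) * exp (-√(x * z) / θ - x / θ')) := by
  rw [interferencePDF, signalPDF, if_pos hx, if_pos (mul_pos hx hz), mul_rpow hx.le hz.le,
    show (ν + 2 * ν' - 2) / 2 = 1 + (ν' - 1) + (ν - 2) / 2 by ring, rpow_add hx, rpow_add hx,
    rpow_one, exp_sub, neg_div θ' x, exp_neg]
  ring

theorem lintegral_abs_mul_interferencePDF_mul_signalPDF {ν θ ν' θ' : ℝ} (hν : 0 ≤ ν) (hθ : 0 ≤ θ)
    (hν' : 0 < ν') (hθ' : 0 < θ') (z : ℝ) :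
    ∫⁻ x, ENNReal.ofReal |x| * ENNReal.ofReal (interferencePDF ν' θ' x) *
        ENNReal.ofReal (signalPDF ν θ (x * z)) = ENNReal.ofReal (sirPDF ν θ ν' θ' z) := by
  by_cases hz : 0 < z
  · have hΓ := Gamma_nonneg_of_nonneg hν
    have hΓ' := Gamma_nonneg_of_nonneg hν'.le
    have h_integrand : ∀ x, ENNReal.ofReal |x| * ENNReal.ofReal (interferencePDF ν' θ' x) *
        ENNReal.ofReal (signalPDF ν θ (x * z)) = (Ioi 0).indicator (fun x => ENNReal.ofReal
          (z ^ ((ν - 2) / 2) / (2 * θ ^ ν * θ' ^ ν' * Gamma ν * Gamma ν') *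
            (x ^ ((ν + 2 * ν' - 2) / 2) * exp (-√(x * z) / θ - x / θ')))) x := by
      intro x
      by_cases hx : x ∈ Ioi 0
      · rw [indicator_of_mem hx, abs_of_pos hx, ← ENNReal.ofReal_mul hx.le,
          ← ENNReal.ofReal_mul (mul_nonneg hx.le (interferencePDF_nonneg hν'.le hθ'.le x)),
          mul_interferencePDF_mul_signalPDF hx hz]
      · rw [indicator_of_notMem hx, interferencePDF, if_neg (mt mem_Ioi.2 hx), ENNReal.ofReal_zero, mul_zero,
          zero_mul]
    rw [lintegral_congr h_integrand, lintegral_indicator measurableSet_Ioi,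
      ← ofReal_integral_eq_lintegral_ofReal
        ((integrableOn_rpow_mul_exp_neg_sqrt_div_sub_div (by linarith) hθ hθ').const_mul _)
        ((ae_restrict_iff' measurableSet_Ioi).2 (ae_of_all _ fun x (hx : 0 < x) => by positivity)),
      integral_const_mul, sirPDF, if_pos hz]
  · have h_integrand : ∀ x, ENNReal.ofReal |x| * ENNReal.ofReal (interferencePDF ν' θ' x) *
        ENNReal.ofReal (signalPDF ν θ (x * z)) = 0 := by
      intro x
      by_cases hx : 0 < x
      · rw [signalPDF, if_neg (by nlinarith), ENNReal.ofReal_zero, mul_zero]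
      · rw [interferencePDF, if_neg hx, ENNReal.ofReal_zero, mul_zero, zero_mul]
    rw [lintegral_congr h_integrand, lintegral_zero, sirPDF, if_neg hz, ENNReal.ofReal_zero]

/-- Eq. (44) of the paper: PDF of the SIR `Z = S/I`, where the desired signal
power `S` is the square of a Gamma(ν, θ) variable and the interference `I` is
Gamma(ν', θ'), independent of `S`. -/
theorem sir_pdf
    {α : Type*} [MeasurableSpace α] (μ : Measure α) [IsProbabilityMeasure μ]
    (ν θ ν' θ' : ℝ) (hν : 0 < ν) (hθ : 0 < θ) (hν' : 0 < ν') (hθ' : 0 < θ')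
    (S I : α → ℝ) (hS : Measurable S) (hI : Measurable I)
    (hSlaw : Measure.map S μ = volume.withDensity (fun x => ENNReal.ofReal
      (if 0 < x then
        x ^ ((ν - 2) / 2) / (2 * θ ^ ν * Real.Gamma ν) * Real.exp (-Real.sqrt x / θ)
      else 0)))
    (hIlaw : Measure.map I μ = volume.withDensity (fun x => ENNReal.ofReal
      (if 0 < x then
        x ^ (ν' - 1) / (θ' ^ ν' * Real.Gamma ν') * Real.exp (-x / θ')
      else 0)))
    (hindep : ProbabilityTheory.IndepFun S I μ) :
    Measure.map (fun ω => S ω / I ω) μ = volume.withDensity (fun z => ENNReal.ofReal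
      (if 0 < z then
        z ^ ((ν - 2) / 2) / (2 * θ ^ ν * θ' ^ ν' * Real.Gamma ν * Real.Gamma ν') *
          ∫ x in Set.Ioi (0 : ℝ),
            x ^ ((ν + 2 * ν' - 2) / 2) * Real.exp (-Real.sqrt (x * z) / θ - x / θ')
      else 0)) := by
  rw [map_div_eq_withDensity_of_indepFun hS.aemeasurable hI.aemeasurable
    (measurable_signalPDF ν θ).ennreal_ofReal (measurable_interferencePDF ν' θ').ennreal_ofReal
    hSlaw hIlaw hindep]
  congr 1 with z
  exact lintegral_abs_mul_interferencePDF_mul_signalPDF hν.le hθ.le hν' hθ' z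
end

section
/- Let ν, θ, ν', θ' > 0 be real numbers, and let S and I be independent real random variables such that S has probability density function f_S(x) = x^{(ν−2)/2} / (2 θ^ν Γ(ν)) · exp(−√x/θ) for x > 0 (and 0 otherwise) and I has probability density function f_I(x) = x^{ν'−1} / (θ'^{ν'} Γ(ν')) · exp(−x/θ') for x > 0 (and 0 otherwise). Then the ergodic rate satisfies E[ln(1 + S/I)] = 1 / (2 θ^ν θ'^{ν'} Γ(ν) Γ(ν')) · ∫_0^∞ z^{(ν−2)/2} ln(1 + z) · [∫_0^∞ x^{(ν + 2ν' − 2)/2} exp(−√(xz)/θ − x/θ') dx] dz, where Γ denotes the Gamma function. -/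
/-!
For independent positive `S`, `I` with densities `f_S`, `f_I`, conditioning on `I = t` and
substituting `s = t z` shows that `S / I` has density `r(z) = ∫_0^∞ t f_I(t) f_S(t z) dt`, so
`E[g(S / I)] = ∫_0^∞ g(z) r(z) dz` for every `g ≥ 0`. For the two Gamma-type densities,
`t f_I(t) f_S(t z)` is the constant of the theorem times
`z^((ν-2)/2) t^((ν+2ν'-2)/2) exp(-√(t z)/θ - t/θ')`.

Everything is computed with lower Lebesgue integrals, where Tonelli needs no integrability;
returning to Bochner integrals only uses that `r` is finite almost everywhere, which holds
because `r` integrates to `1`.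
-/

open MeasureTheory Set ENNReal ProbabilityTheory

theorem lintegral_comp_mul_left_of_pos (g : ℝ → ℝ≥0∞) {a : ℝ} (ha : 0 < a) :
    ∫⁻ x, g (a * x) = ENNReal.ofReal a⁻¹ * ∫⁻ y, g y := by
  rw [← (measurableEmbedding_mulLeft₀ ha.ne').lintegral_map, Real.map_volume_mul_left ha.ne',
    lintegral_smul_measure, abs_of_pos (inv_pos.2 ha), smul_eq_mul]

theorem lintegral_withDensity_comp_div {f h : ℝ → ℝ≥0∞} (hf : Measurable f) (hh : Measurable h)
    {t : ℝ} (ht : 0 < t) :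
    ∫⁻ s, h (s / t) ∂volume.withDensity f = ENNReal.ofReal t * ∫⁻ z, f (t * z) * h z := by
  have hcancel (z : ℝ) : t * z / t = z := mul_div_cancel_left₀ z ht.ne'
  calc ∫⁻ s, h (s / t) ∂volume.withDensity f
      = ∫⁻ s, f s * h (s / t) :=
        lintegral_withDensity_eq_lintegral_mul _ hf (by fun_prop : Measurable fun s => h (s / t))
    _ = ENNReal.ofReal t * ∫⁻ z, f (t * z) * h (t * z / t) := by
        rw [lintegral_comp_mul_left_of_pos (fun s => f s * h (s / t)) ht, ← mul_assoc,
          ← ENNReal.ofReal_mul ht.le, mul_inv_cancel₀ ht.ne', ENNReal.ofReal_one, one_mul]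
    _ = ENNReal.ofReal t * ∫⁻ z, f (t * z) * h z := by simp only [hcancel]

theorem ae_pos_of_map_eq_withDensity {α : Type*} [MeasurableSpace α] {μ : Measure α}
    {S : α → ℝ} (hS : Measurable S) {f : ℝ → ℝ≥0∞} (hf : Measurable f)
    (hf0 : ∀ x ≤ 0, f x = 0) (hlaw : μ.map S = volume.withDensity f) :
    ∀ᵐ ω ∂μ, 0 < S ω := by
  refine ae_of_ae_map hS.aemeasurable ?_
  rw [hlaw, ae_withDensity_iff hf]
  exact ae_of_all _ fun x hx => not_le.1 fun h => hx (hf0 x h)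

/-- The density of `S / I` for independent positive random variables `S`, `I` with densities
`fS`, `fI`. -/
noncomputable def ratioPDF (fS fI : ℝ → ℝ≥0∞) (z : ℝ) : ℝ≥0∞ :=
  ∫⁻ t in Ioi 0, ENNReal.ofReal t * fI t * fS (t * z)

theorem measurable_ratioPDF {fS fI : ℝ → ℝ≥0∞} (hfS : Measurable fS) (hfI : Measurable fI) :
    Measurable (ratioPDF fS fI) :=
  Measurable.lintegral_prod_right'
    (f := fun p : ℝ × ℝ => ENNReal.ofReal p.2 * fI p.2 * fS (p.2 * p.1)) (by fun_prop)

theorem toReal_ratioPDF_ofReal {fS fI : ℝ → ℝ} (hfS : Measurable fS) (hfI : Measurable fI)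
    (hfS0 : ∀ x, 0 ≤ fS x) (hfI0 : ∀ x, 0 ≤ fI x) (z : ℝ) :
    (ratioPDF (fun x => ENNReal.ofReal (fS x)) (fun x => ENNReal.ofReal (fI x)) z).toReal =
      ∫ t in Ioi 0, t * fI t * fS (t * z) := by
  rw [integral_eq_lintegral_of_nonneg_ae
    ((ae_restrict_iff' measurableSet_Ioi).2 (ae_of_all _ fun t (ht : 0 < t) =>
      mul_nonneg (mul_nonneg ht.le (hfI0 t)) (hfS0 _)))
    (Measurable.aestronglyMeasurable (by fun_prop))]
  congr 1
  refine setLIntegral_congr_fun measurableSet_Ioi fun t (ht : 0 < t) => ?_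
  rw [ENNReal.ofReal_mul (mul_nonneg ht.le (hfI0 t)), ENNReal.ofReal_mul ht.le]

namespace ProbabilityTheory.IndepFun

variable {α : Type*} [MeasurableSpace α] {μ : Measure α} [IsFiniteMeasure μ]

theorem lintegral_comp_prod {β γ : Type*} [MeasurableSpace β] [MeasurableSpace γ]
    {S : α → β} {I : α → γ} (hS : Measurable S) (hI : Measurable I) (hindep : IndepFun S I μ)
    {g : β × γ → ℝ≥0∞} (hg : Measurable g) :
    ∫⁻ ω, g (S ω, I ω) ∂μ = ∫⁻ t, ∫⁻ s, g (s, t) ∂μ.map S ∂μ.map I := by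
  rw [← lintegral_map hg (hS.prodMk hI),
    hindep.map_prod_eq_prod_map_map hS.aemeasurable hI.aemeasurable,
    lintegral_prod_symm _ hg.aemeasurable]

variable {S I : α → ℝ} (hS : Measurable S) (hI : Measurable I) (hindep : IndepFun S I μ)
  {fS fI : ℝ → ℝ≥0∞} (hfS : Measurable fS) (hfI : Measurable fI)
  (hfS0 : ∀ x ≤ 0, fS x = 0) (hfI0 : ∀ x ≤ 0, fI x = 0)
  (hSlaw : μ.map S = volume.withDensity fS) (hIlaw : μ.map I = volume.withDensity fI)
include hS hI hindep hfS hfI hfS0 hfI0 hSlaw hIlaw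

theorem lintegral_comp_div {h : ℝ → ℝ≥0∞} (hh : Measurable h) :
    ∫⁻ ω, h (S ω / I ω) ∂μ = ∫⁻ z in Ioi 0, h z * ratioPDF fS fI z := by
  have hmeas : Measurable fun p : ℝ × ℝ =>
      ENNReal.ofReal p.1 * fI p.1 * fS (p.1 * p.2) * h p.2 := by
    fun_prop
  calc ∫⁻ ω, h (S ω / I ω) ∂μ
      = ∫⁻ t, fI t * ∫⁻ s, h (s / t) ∂volume.withDensity fS := by
        rw [hindep.lintegral_comp_prod hS hI (g := fun p => h (p.1 / p.2)) (by fun_prop),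
          hSlaw, hIlaw, lintegral_withDensity_eq_lintegral_mul _ hfI ?_]
        · rfl
        · exact (hh.comp (measurable_fst.div measurable_snd)).lintegral_prod_left'
    _ = ∫⁻ t in Ioi 0, ∫⁻ z, ENNReal.ofReal t * fI t * fS (t * z) * h z := by
        have hsupp : (fun t => fI t * ∫⁻ s, h (s / t) ∂volume.withDensity fS).support ⊆ Ioi 0 :=
          fun t ht => mem_Ioi.2 <| not_le.1 fun h0 => ht (by simp only [hfI0 t h0, zero_mul])
        rw [← setLIntegral_eq_of_support_subset hsupp]
        refine setLIntegral_congr_fun measurableSet_Ioi fun t ht => ?_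
        rw [lintegral_withDensity_comp_div hfS hh ht, ← mul_assoc, mul_comm (fI t),
          ← lintegral_const_mul _ (by fun_prop)]
        simp only [mul_assoc]
    _ = ∫⁻ z, ∫⁻ t in Ioi 0, ENNReal.ofReal t * fI t * fS (t * z) * h z :=
        lintegral_lintegral_swap hmeas.aemeasurable
    _ = ∫⁻ z in Ioi 0, h z * ratioPDF fS fI z := by
        have hsupp : (fun z => ∫⁻ t in Ioi 0, ENNReal.ofReal t * fI t * fS (t * z) * h z).support
            ⊆ Ioi 0 := by
          refine fun z hz => mem_Ioi.2 <| not_le.1 fun h0 => hz ?_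
          refine setLIntegral_eq_zero measurableSet_Ioi fun t ht => ?_
          simp only [hfS0 _ (mul_nonpos_of_nonneg_of_nonpos (le_of_lt ht) h0), mul_zero, zero_mul,
            Pi.zero_apply]
        rw [← setLIntegral_eq_of_support_subset hsupp]
        refine setLIntegral_congr_fun measurableSet_Ioi fun z _ => ?_
        rw [ratioPDF, lintegral_mul_const _ (by fun_prop), mul_comm]

theorem ae_ratioPDF_lt_top : ∀ᵐ z ∂volume.restrict (Ioi 0), ratioPDF fS fI z < ∞ := by
  refine ae_lt_top (measurable_ratioPDF hfS hfI) ?_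
  have htotal := lintegral_comp_div hS hI hindep hfS hfI hfS0 hfI0 hSlaw hIlaw
    (measurable_const (a := (1 : ℝ≥0∞)))
  simp only [one_mul, lintegral_const] at htotal
  rw [← htotal]
  exact measure_ne_top μ univ

theorem integral_comp_div {g : ℝ → ℝ} (hg : Measurable g) (hg0 : ∀ z, 0 < z → 0 ≤ g z) :
    ∫ ω, g (S ω / I ω) ∂μ = ∫ z in Ioi 0, g z * (ratioPDF fS fI z).toReal := by
  have hratio : ∀ᵐ ω ∂μ, 0 < S ω / I ω := by
    filter_upwards [ae_pos_of_map_eq_withDensity hS hfS hfS0 hSlaw,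
      ae_pos_of_map_eq_withDensity hI hfI hfI0 hIlaw] with ω hSω hIω using div_pos hSω hIω
  calc ∫ ω, g (S ω / I ω) ∂μ
      = (∫⁻ ω, ENNReal.ofReal (g (S ω / I ω)) ∂μ).toReal :=
        integral_eq_lintegral_of_nonneg_ae (hratio.mono fun ω => hg0 _)
          (Measurable.aestronglyMeasurable (by fun_prop))
    _ = (∫⁻ z in Ioi 0, ENNReal.ofReal (g z) * ratioPDF fS fI z).toReal := by
        rw [lintegral_comp_div hS hI hindep hfS hfI hfS0 hfI0 hSlaw hIlaw hg.ennreal_ofReal]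
    _ = ∫ z in Ioi 0, (ENNReal.ofReal (g z) * ratioPDF fS fI z).toReal :=
        (integral_toReal (hg.ennreal_ofReal.mul (measurable_ratioPDF hfS hfI)).aemeasurable
          ((ae_ratioPDF_lt_top hS hI hindep hfS hfI hfS0 hfI0 hSlaw hIlaw).mono
            fun z hz => mul_lt_top ofReal_lt_top hz)).symm
    _ = ∫ z in Ioi 0, g z * (ratioPDF fS fI z).toReal :=
        setIntegral_congr_fun measurableSet_Ioi fun z hz => by
          rw [toReal_mul, toReal_ofReal (hg0 z hz)]

end ProbabilityTheory.IndepFun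

/-- `squaredGammaPDF ν θ` is the density of `X ^ 2` and `gammaScalePDF ν θ` that of `X`, for
`X ~ Gamma(ν, θ)` with shape `ν` and scale `θ`. -/
noncomputable def squaredGammaPDF (ν θ x : ℝ) : ℝ :=
  if 0 < x then x ^ ((ν - 2) / 2) / (2 * θ ^ ν * Real.Gamma ν) * Real.exp (-Real.sqrt x / θ)
  else 0

noncomputable def gammaScalePDF (ν θ x : ℝ) : ℝ :=
  if 0 < x then x ^ (ν - 1) / (θ ^ ν * Real.Gamma ν) * Real.exp (-x / θ) else 0

section GammaDensities

variable {ν θ ν' θ' : ℝ}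

theorem squaredGammaPDF_of_nonpos {x : ℝ} (hx : x ≤ 0) : squaredGammaPDF ν θ x = 0 :=
  if_neg hx.not_gt

theorem gammaScalePDF_of_nonpos {x : ℝ} (hx : x ≤ 0) : gammaScalePDF ν θ x = 0 :=
  if_neg hx.not_gt

@[fun_prop]
theorem measurable_squaredGammaPDF : Measurable (squaredGammaPDF ν θ) :=
  Measurable.ite measurableSet_Ioi (by fun_prop) measurable_const

@[fun_prop]
theorem measurable_gammaScalePDF : Measurable (gammaScalePDF ν θ) :=
  Measurable.ite measurableSet_Ioi (by fun_prop) measurable_const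

theorem squaredGammaPDF_nonneg (hν : 0 < ν) (hθ : 0 < θ) (x : ℝ) :
    0 ≤ squaredGammaPDF ν θ x := by
  have := Real.Gamma_pos_of_pos hν
  unfold squaredGammaPDF
  split_ifs <;> positivity

theorem gammaScalePDF_nonneg (hν : 0 < ν) (hθ : 0 < θ) (x : ℝ) : 0 ≤ gammaScalePDF ν θ x := by
  have := Real.Gamma_pos_of_pos hν
  unfold gammaScalePDF
  split_ifs <;> positivity

theorem mul_gammaScalePDF_mul_squaredGammaPDF {x z : ℝ} (hx : 0 < x) (hz : 0 < z) :
    x * gammaScalePDF ν' θ' x * squaredGammaPDF ν θ (x * z) =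
      1 / (2 * θ ^ ν * θ' ^ ν' * Real.Gamma ν * Real.Gamma ν') * z ^ ((ν - 2) / 2) *
        (x ^ ((ν + 2 * ν' - 2) / 2) * Real.exp (-Real.sqrt (x * z) / θ - x / θ')) := by
  have hexp : Real.exp (-Real.sqrt (x * z) / θ - x / θ')
      = Real.exp (-x / θ') * Real.exp (-Real.sqrt (x * z) / θ) := by
    rw [← Real.exp_add]; ring_nf
  have hpow : x ^ ((ν + 2 * ν' - 2) / 2) = x * x ^ (ν' - 1) * x ^ ((ν - 2) / 2) := by
    rw [mul_comm x, ← Real.rpow_add_one hx.ne', ← Real.rpow_add hx]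
    ring_nf
  rw [gammaScalePDF, squaredGammaPDF, if_pos hx, if_pos (mul_pos hx hz),
    Real.mul_rpow hx.le hz.le, hexp, hpow]
  ring

theorem toReal_ratioPDF_squaredGammaPDF_gammaScalePDF (hν : 0 < ν) (hθ : 0 < θ) (hν' : 0 < ν')
    (hθ' : 0 < θ') {z : ℝ} (hz : 0 < z) :
    (ratioPDF (fun x => ENNReal.ofReal (squaredGammaPDF ν θ x))
      (fun x => ENNReal.ofReal (gammaScalePDF ν' θ' x)) z).toReal =
      1 / (2 * θ ^ ν * θ' ^ ν' * Real.Gamma ν * Real.Gamma ν') * z ^ ((ν - 2) / 2) *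
        ∫ x in Ioi 0, x ^ ((ν + 2 * ν' - 2) / 2) * Real.exp (-Real.sqrt (x * z) / θ - x / θ') := by
  rw [toReal_ratioPDF_ofReal (by fun_prop) (by fun_prop) (squaredGammaPDF_nonneg hν hθ)
    (gammaScalePDF_nonneg hν' hθ'), ← integral_const_mul]
  exact setIntegral_congr_fun measurableSet_Ioi fun x hx =>
    mul_gammaScalePDF_mul_squaredGammaPDF hx hz

end GammaDensities

/-- Eq. (41) of the paper (Theorem 3): the ergodic rate `E[ln(1 + SIR)]` of a
typical UE. -/
theorem ergodic_rate
    {α : Type*} [MeasurableSpace α] (μ : Measure α) [IsProbabilityMeasure μ]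
    (ν θ ν' θ' : ℝ) (hν : 0 < ν) (hθ : 0 < θ) (hν' : 0 < ν') (hθ' : 0 < θ')
    (S I : α → ℝ) (hS : Measurable S) (hI : Measurable I)
    (hSlaw : Measure.map S μ = volume.withDensity (fun x => ENNReal.ofReal
      (if 0 < x then
        x ^ ((ν - 2) / 2) / (2 * θ ^ ν * Real.Gamma ν) * Real.exp (-Real.sqrt x / θ)
      else 0)))
    (hIlaw : Measure.map I μ = volume.withDensity (fun x => ENNReal.ofReal
      (if 0 < x then
        x ^ (ν' - 1) / (θ' ^ ν' * Real.Gamma ν') * Real.exp (-x / θ')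
      else 0)))
    (hindep : ProbabilityTheory.IndepFun S I μ) :
    ∫ ω, Real.log (1 + S ω / I ω) ∂μ =
      1 / (2 * θ ^ ν * θ' ^ ν' * Real.Gamma ν * Real.Gamma ν') *
        ∫ z in Set.Ioi (0 : ℝ),
          z ^ ((ν - 2) / 2) * Real.log (1 + z) *
            ∫ x in Set.Ioi (0 : ℝ),
              x ^ ((ν + 2 * ν' - 2) / 2) * Real.exp (-Real.sqrt (x * z) / θ - x / θ') := by
  replace hSlaw : μ.map S = volume.withDensity fun x => .ofReal (squaredGammaPDF ν θ x) := hSlaw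
  replace hIlaw : μ.map I = volume.withDensity fun x => .ofReal (gammaScalePDF ν' θ' x) := hIlaw
  rw [hindep.integral_comp_div hS hI (by fun_prop) (by fun_prop)
      (fun x hx => by rw [squaredGammaPDF_of_nonpos hx, ofReal_zero])
      (fun x hx => by rw [gammaScalePDF_of_nonpos hx, ofReal_zero]) hSlaw hIlaw
      (by fun_prop) (fun z hz => Real.log_nonneg (by linarith)),
    ← integral_const_mul]
  refine setIntegral_congr_fun measurableSet_Ioi fun z (hz : 0 < z) => ?_
  rw [toReal_ratioPDF_squaredGammaPDF_gammaScalePDF hν hθ hν' hθ' hz]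
  ring
end
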